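/- arXiv:2304.02760 — 6 statements merged into one kernel-verified Lean document; each statement's English description precedes it below -/
import Mathlib

section
/- If x ≠ g and 0 < η < 1, then the inner product ⟨t, g − x⟩ is nonnegative, where t = (g − p)/‖g − p‖ is the unit tangent from the headway point p = x + η‖x − g‖(cos θ, sin θ) to the goal. In fact ⟨t, g − x⟩ = (‖g − x‖²/‖g − p‖)·(1 − η⟨(cosθ,sinθ), (g−x)/‖g−x‖⟩) ≥ 0. -/
open scoped RealInnerProductSpace

/-- For `x ≠ g` and `0 < η < 1`, the inner product of the unit headway tangent
`t = (g - p)/‖g - p‖` with `g - x` equals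
`(‖g - x‖² / ‖g - p‖) (1 - η ⟪u, (g - x)/‖g - x‖⟫)` and is nonnegative. -/
theorem headway_tangent_inner_nonneg
    (x g : EuclideanSpace ℝ (Fin 2)) (θ η : ℝ) (hη0 : 0 < η) (hη1 : η < 1) (hxg : x ≠ g)
    (u p t : EuclideanSpace ℝ (Fin 2))
    (hu : u = (WithLp.equiv 2 (Fin 2 → ℝ)).symm ![Real.cos θ, Real.sin θ])
    (hp : p = x + (η * ‖x - g‖) • u)
    (ht : t = ‖g - p‖⁻¹ • (g - p)) :
    ⟪t, g - x⟫ = (‖g - x‖ ^ 2 / ‖g - p‖) * (1 - η * ⟪u, ‖g - x‖⁻¹ • (g - x)⟫) ∧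
      0 ≤ ⟪t, g - x⟫ := by
  have hgx : (0:ℝ) < ‖g - x‖ := by
    rw [norm_pos_iff, sub_ne_zero]; exact fun h => hxg h.symm
  have hrev : ‖x - g‖ = ‖g - x‖ := norm_sub_rev _ _
  have hunorm : ‖u‖ = 1 := by
    subst hu
    rw [EuclideanSpace.norm_eq]
    simp [Fin.sum_univ_two, Real.cos_sq_add_sin_sq]
  have hgp : g - p = (g - x) - (η * ‖x - g‖) • u := by
    subst hp; abel
  have hinner : ⟪g - p, g - x⟫ = ‖g - x‖ ^ 2 - η * ‖g - x‖ * ⟪u, g - x⟫ := by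
    rw [hgp, inner_sub_left, real_inner_smul_left, real_inner_self_eq_norm_sq, hrev]
  have ht' : ⟪t, g - x⟫ = ‖g - p‖⁻¹ * (‖g - x‖ ^ 2 - η * ‖g - x‖ * ⟪u, g - x⟫) := by
    rw [ht, real_inner_smul_left, hinner]
  have hcs : ⟪u, g - x⟫ ≤ ‖g - x‖ := by
    have := real_inner_le_norm u (g - x)
    rwa [hunorm, one_mul] at this
  set I : ℝ := ⟪u, g - x⟫ with hI
  constructor
  · rw [ht', real_inner_smul_right, ← hI, div_eq_mul_inv]
    have hne : ‖g - x‖ ≠ 0 := hgx.ne'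
    have key : ‖g - x‖ ^ 2 * (1 - η * (‖g - x‖⁻¹ * I)) = ‖g - x‖ ^ 2 - η * ‖g - x‖ * I := by
      field_simp
    rw [← key]
    ring
  · rw [ht']
    have h1 : 0 ≤ ‖g - p‖⁻¹ := inv_nonneg.mpr (norm_nonneg _)
    have h2 : 0 ≤ ‖g - x‖ ^ 2 - η * ‖g - x‖ * ⟪u, g - x⟫ := by
      nlinarith [mul_le_mul_of_nonneg_left hcs (mul_pos hη0 hgx).le]
    positivity
end

section
/- The distance of the unicycle position to the goal is bounded above by (1/√(1−η²))·‖x̄ − g‖, i.e. ‖x̄ − g‖² ≥ (1 − η²)‖x − g‖², where x̄ is the projection of the unicycle position onto the headway motion line. -/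
open scoped RealInnerProductSpace

/-- Lower bound on the projected distance:
`‖x̄ - g‖² ≥ (1 - η²) ‖x - g‖²`, i.e. `‖x - g‖ ≤ ‖x̄ - g‖/√(1 - η²)`. -/
theorem projected_position_dist_ge
    (x g : EuclideanSpace ℝ (Fin 2)) (θ η : ℝ) (hη0 : 0 < η) (hη1 : η < 1) (hxg : x ≠ g)
    (u p t xb : EuclideanSpace ℝ (Fin 2))
    (hu : u = (WithLp.equiv 2 (Fin 2 → ℝ)).symm ![Real.cos θ, Real.sin θ])
    (hp : p = x + (η * ‖x - g‖) • u)
    (ht : t = ‖g - p‖⁻¹ • (g - p))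
    (hxb : xb = g + ⟪t, x - g⟫ • t) :
    (1 - η ^ 2) * ‖x - g‖ ^ 2 ≤ ‖xb - g‖ ^ 2 := by
  set r : ℝ := ‖x - g‖ with hrdef
  have hr : 0 < r := by
    simpa [hrdef] using norm_pos_iff.mpr (sub_ne_zero.mpr hxg)
  have huu : ⟪u, u⟫ = 1 := by
    rw [hu]
    rw [PiLp.inner_apply]; simp [Fin.sum_univ_two]
  have hnu : ‖u‖ = 1 := by
    have := real_inner_self_eq_norm_sq u
    nlinarith [norm_nonneg u]
  set c : ℝ := ⟪u, g - x⟫ with hcdef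
  have hcs : |c| ≤ r := by
    have := abs_real_inner_le_norm u (g - x)
    rw [hnu, one_mul] at this
    simpa [hcdef, hrdef, norm_sub_rev g x] using this
  have hgp : g - p = (g - x) - (η * r) • u := by
    rw [hp]; abel
  have hQ : ‖g - p‖ ^ 2 = r ^ 2 - 2 * η * r * c + η ^ 2 * r ^ 2 := by
    have hc2 : ⟪g - x, u⟫ = c := by rw [real_inner_comm]
    rw [hgp, @norm_sub_sq_real, real_inner_smul_right, hc2, norm_smul, norm_sub_rev, hnu]
    simp [abs_of_pos (mul_pos hη0 hr), ← hrdef, abs_of_pos hη0, abs_of_pos hr]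
    ring
  have hQpos : 0 < ‖g - p‖ ^ 2 := by
    rw [hQ]
    rcases abs_le.mp hcs with ⟨h1, h2⟩
    have key : η * r * c ≤ η * r * r :=
      mul_le_mul_of_nonneg_left h2 (le_of_lt (mul_pos hη0 hr))
    nlinarith [mul_pos (mul_pos (sub_pos.mpr hη1) hr) (mul_pos (sub_pos.mpr hη1) hr)]
  have hgpn : ‖g - p‖ ≠ 0 := by
    intro h; rw [h] at hQpos; norm_num at hQpos
  have hipx : ⟪g - p, x - g⟫ = -(r ^ 2) + η * r * c := by
    rw [hgp]
    have h1 : ⟪g - x, x - g⟫ = -(r ^ 2) := by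
      rw [show x - g = -(g - x) by abel, inner_neg_right, real_inner_self_eq_norm_sq,
        norm_sub_rev]
    simp only [inner_sub_left, real_inner_smul_left, h1,
      show ⟪u, x - g⟫ = -c by rw [show x - g = -(g - x) by abel, inner_neg_right, hcdef]]
    ring
  have hxbg : ‖xb - g‖ ^ 2 = (-(r ^ 2) + η * r * c) ^ 2 / ‖g - p‖ ^ 2 := by
    have h1 : xb - g = ⟪t, x - g⟫ • t := by rw [hxb]; abel
    have h2 : ⟪t, x - g⟫ = ‖g - p‖⁻¹ * ⟪g - p, x - g⟫ := by
      rw [ht, real_inner_smul_left]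
    have h3 : ‖t‖ = 1 := by
      rw [ht, norm_smul, norm_inv, norm_norm, inv_mul_cancel₀ hgpn]
    rw [h1, norm_smul, h3, mul_one, h2, hipx, Real.norm_eq_abs, sq_abs, mul_pow]
    field_simp
  rw [hxbg, le_div_iff₀ hQpos, hQ]
  nlinarith [sq_nonneg (η * r * (c - η * r))]
end

section
/- Combined distance-to-goal sandwich bound: √(1−η²)·‖x − g‖ ≤ ‖x̄ − g‖ ≤ ‖x − g‖, equivalently ‖x̄ − g‖ ≤ ‖x − g‖ ≤ ‖x̂ − g‖ where ‖x̂ − g‖ = ‖x̄ − g‖/√(1−η²). -/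
open scoped RealInnerProductSpace
set_option maxHeartbeats 800000

lemma inner_two (v w : EuclideanSpace ℝ (Fin 2)) : ⟪v,w⟫ = v 0 * w 0 + v 1 * w 1 := by
  simp [PiLp.inner_apply, Fin.sum_univ_two, RCLike.inner_apply]; ring

lemma norm_two (v : EuclideanSpace ℝ (Fin 2)) : ‖v‖^2 = v 0^2 + v 1^2 := by
  rw [← real_inner_self_eq_norm_sq]
  simp only [PiLp.inner_apply, Fin.sum_univ_two, RCLike.inner_apply, conj_trivial]; ring

/-- Distance-to-goal sandwich bound: `√(1-η²) ‖x-g‖ ≤ ‖x̄-g‖ ≤ ‖x-g‖ ≤ ‖x̂-g‖`,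
where `‖x̂ - g‖ = ‖x̄ - g‖/√(1-η²)`. -/
theorem distance_to_goal_sandwich
    (x g : EuclideanSpace ℝ (Fin 2)) (θ η : ℝ) (hη0 : 0 < η) (hη1 : η < 1) (hxg : x ≠ g)
    (u p t n xb xh : EuclideanSpace ℝ (Fin 2))
    (hu : u = (WithLp.equiv 2 (Fin 2 → ℝ)).symm ![Real.cos θ, Real.sin θ])
    (hp : p = x + (η * ‖x - g‖) • u)
    (ht : t = ‖g - p‖⁻¹ • (g - p))
    (hn : n = (WithLp.equiv 2 (Fin 2 → ℝ)).symm ![-(t 1), t 0] ∨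
          n = -(WithLp.equiv 2 (Fin 2 → ℝ)).symm ![-(t 1), t 0])
    (hnx : 0 ≤ ⟪n, g - x⟫)
    (hxb : xb = g + ⟪t, x - g⟫ • t)
    (hxh : xh = xb + (η / Real.sqrt (1 - η ^ 2) * ‖xb - g‖) • n) :
    Real.sqrt (1 - η ^ 2) * ‖x - g‖ ≤ ‖xb - g‖ ∧
      ‖xb - g‖ ≤ ‖x - g‖ ∧ ‖x - g‖ ≤ ‖xh - g‖ ∧
      ‖xh - g‖ = ‖xb - g‖ / Real.sqrt (1 - η ^ 2) := by
  set s := Real.sqrt (1 - η ^ 2) with hs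
  have h1η : (0:ℝ) < 1 - η ^ 2 := by nlinarith
  have hs0 : 0 < s := Real.sqrt_pos.mpr h1η
  have hs2 : s ^ 2 = 1 - η ^ 2 := Real.sq_sqrt h1η.le
  have hxg0 : (0:ℝ) < ‖x - g‖ := by
    rw [norm_pos_iff, sub_ne_zero]; exact hxg
  -- u is a unit vector
  have hu1 : ‖u‖ = 1 := by
    have h := norm_two u
    rw [hu] at h
    simp at h
    have : ‖u‖ ^ 2 = 1 := by rw [hu]; simpa [add_comm] using h
    nlinarith [norm_nonneg u, this]
  -- g ≠ p
  have hgp0 : (0:ℝ) < ‖g - p‖ := by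
    have hgpx : g - p = (g - x) - (η * ‖x - g‖) • u := by rw [hp]; abel
    have h2 : ‖(g - x)‖ - ‖(η * ‖x - g‖) • u‖ ≤ ‖g - p‖ := by
      rw [hgpx]; exact norm_sub_norm_le _ _
    rw [norm_smul, hu1, norm_sub_rev x g] at h2
    have : ‖(η * ‖g - x‖)‖ = η * ‖g - x‖ := by
      rw [Real.norm_eq_abs, abs_of_nonneg]; positivity
    rw [norm_sub_rev x g] at hxg0
    nlinarith
  have hgpne : g - p ≠ 0 := by
    intro h; rw [h, norm_zero] at hgp0; exact lt_irrefl 0 hgp0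
  -- t is a unit vector
  have ht1 : ‖t‖ = 1 := by
    rw [ht, norm_smul, Real.norm_eq_abs, abs_of_pos (inv_pos.mpr hgp0)]
    field_simp
  have htsq : t 0 ^ 2 + t 1 ^ 2 = 1 := by
    have := norm_two t; rw [ht1] at this; linarith [this.symm]
  -- n is a unit vector orthogonal to t
  have hn0 : n 0 = -(t 1) ∨ n 0 = t 1 := by
    rcases hn with h | h <;> rw [h] <;> simp
  have hpair : (n 0 = -(t 1) ∧ n 1 = t 0) ∨ (n 0 = t 1 ∧ n 1 = -(t 0)) := by
    rcases hn with h | h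
    · left; rw [h]; constructor <;> simp
    · right; rw [h]; constructor <;> simp
  have htn : ⟪t, n⟫ = 0 := by
    rw [inner_two]
    rcases hpair with ⟨h0, h1⟩ | ⟨h0, h1⟩ <;> rw [h0, h1] <;> ring
  have hn1 : ‖n‖ = 1 := by
    have h := norm_two n
    have hsq : ‖n‖ ^ 2 = 1 := by
      rcases hpair with ⟨h0, h1⟩ | ⟨h0, h1⟩ <;> rw [h, h0, h1] <;> nlinarith
    nlinarith [norm_nonneg n]
  -- p - g is a multiple of t
  have hpg : g - p = ‖g - p‖ • t := by
    rw [ht, smul_smul, mul_inv_cancel₀ (ne_of_gt hgp0), one_smul]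
  -- components
  set a := ⟪t, x - g⟫ with ha
  set b := ⟪n, x - g⟫ with hb
  -- |b| ≤ η ‖x - g‖
  have hbb : |b| ≤ η * ‖x - g‖ := by
    have hxp : x - p = -((η * ‖x - g‖) • u) := by rw [hp]; abel
    have hsplit : b = ⟪n, x - p⟫ + ⟪n, p - g⟫ := by
      rw [hb, ← inner_add_right]; congr 1; abel
    have hnp : ⟪n, p - g⟫ = 0 := by
      have : p - g = -(‖g - p‖ • t) := by rw [← hpg]; abel
      rw [this, inner_neg_right, inner_smul_right, real_inner_comm, htn]
      ring
    have hcs : |⟪n, x - p⟫| ≤ ‖n‖ * ‖x - p‖ := abs_real_inner_le_norm n (x - p)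
    have hxpn : ‖x - p‖ = η * ‖x - g‖ := by
      rw [hxp, norm_neg, norm_smul, hu1, Real.norm_eq_abs, abs_of_nonneg (by positivity)]
      ring
    rw [hsplit, hnp, add_zero]
    calc |⟪n, x - p⟫| ≤ ‖n‖ * ‖x - p‖ := hcs
      _ = η * ‖x - g‖ := by rw [hn1, hxpn]; ring
  -- Parseval : ‖x-g‖² = a² + b²
  have hPar : ‖x - g‖ ^ 2 = a ^ 2 + b ^ 2 := by
    rw [norm_two, ha, hb, inner_two, inner_two]
    rcases hpair with ⟨h0, h1⟩ | ⟨h0, h1⟩ <;> rw [h0, h1] <;>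
      linear_combination (-((x - g) 0 ^ 2 + (x - g) 1 ^ 2)) * htsq
  -- ‖xb - g‖ = |a|
  have hxbg : ‖xb - g‖ = |a| := by
    have : xb - g = a • t := by rw [hxb]; abel
    rw [this, norm_smul, ht1, Real.norm_eq_abs, mul_one]
  -- lower bound
  have hlow : s * ‖x - g‖ ≤ ‖xb - g‖ := by
    rw [hxbg]
    have hsq : (s * ‖x - g‖) ^ 2 ≤ |a| ^ 2 := by
      have : |a| ^ 2 = a ^ 2 := sq_abs a
      rw [this, mul_pow, hs2]
      nlinarith [hPar, hbb, abs_nonneg b, sq_abs b, neg_abs_le b]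
    have h1 : 0 ≤ s * ‖x - g‖ := by positivity
    exact (pow_le_pow_iff_left₀ h1 (abs_nonneg a) two_ne_zero).mp hsq
  -- upper bound
  have hup : ‖xb - g‖ ≤ ‖x - g‖ := by
    rw [hxbg]
    have hsq : |a| ^ 2 ≤ ‖x - g‖ ^ 2 := by
      rw [sq_abs]; nlinarith [hPar, sq_nonneg b]
    exact (pow_le_pow_iff_left₀ (abs_nonneg a) (norm_nonneg _) two_ne_zero).mp hsq
  -- ‖xh - g‖ = ‖xb - g‖ / s
  have hxhg : ‖xh - g‖ = ‖xb - g‖ / s := by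
    set k := η / s * ‖xb - g‖ with hk
    have hd : xh - g = a • t + k • n := by rw [hxh, hxb]; abel
    have hnorm2 : ‖xh - g‖ ^ 2 = a ^ 2 + k ^ 2 := by
      rw [← real_inner_self_eq_norm_sq, hd]
      rw [inner_add_left, inner_add_right, inner_add_right]
      rw [real_inner_smul_left, real_inner_smul_left, real_inner_smul_left,
        real_inner_smul_left, real_inner_smul_right, real_inner_smul_right,
        real_inner_smul_right, real_inner_smul_right]
      rw [real_inner_self_eq_norm_sq, real_inner_self_eq_norm_sq, ht1, hn1, htn]
      have h5 : ⟪n, t⟫ = (0:ℝ) := by rw [real_inner_comm]; exact htn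
      linear_combination (k * a) * h5
    have hk2 : a ^ 2 + k ^ 2 = (‖xb - g‖ / s) ^ 2 := by
      rw [hk, hxbg]
      have h3 : (η / s * |a|) ^ 2 = η ^ 2 * a ^ 2 / s ^ 2 := by
        rw [mul_pow, div_pow, sq_abs]; ring
      have h4 : (|a| / s) ^ 2 = a ^ 2 / s ^ 2 := by rw [div_pow, sq_abs]
      rw [h3, h4, hs2]
      field_simp
      ring
    have hrhs : 0 ≤ ‖xb - g‖ / s := by positivity
    have : ‖xh - g‖ ^ 2 = (‖xb - g‖ / s) ^ 2 := by rw [hnorm2, hk2]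
    have h2 := congrArg Real.sqrt this
    rwa [Real.sqrt_sq (norm_nonneg _), Real.sqrt_sq hrhs] at h2
  have hmid : ‖x - g‖ ≤ ‖xh - g‖ := by
    rw [hxhg]
    rw [le_div_iff₀ hs0]
    calc ‖x - g‖ * s = s * ‖x - g‖ := by ring
      _ ≤ ‖xb - g‖ := hlow
  exact ⟨hlow, hup, hmid, hxhg⟩
end

section
/- Goal alignment monotonicity: along the closed-loop unicycle dynamics with adaptive headway control, the alignment a := ⟨u, (g−x)/‖g−x‖⟩ satisfies da/dt = (κ/η)·⟨n_θ, (g−x)/‖g−x‖⟩²·(1 − 2ηa + η²)/(1 − ηa) ≥ (κ/η)·⟨n_θ,(g−x)/‖g−x‖⟩²·(1 − ηa) ≥ 0, where n_θ = (−sin θ, cos θ). -/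
open scoped RealInnerProductSpace

/-- Goal alignment monotonicity: along the closed-loop adaptive headway dynamics the
alignment `a = ⟪u, (g-x)/‖g-x‖⟫` satisfies
`da/dt = (κ/η) ⟪n_θ, (g-x)/‖g-x‖⟫² (1 - 2ηa + η²)/(1 - ηa)
       ≥ (κ/η) ⟪n_θ, (g-x)/‖g-x‖⟫² (1 - ηa) ≥ 0`. -/
theorem goal_alignment_monotone
    (g : EuclideanSpace ℝ (Fin 2)) (η κ : ℝ) (hη0 : 0 < η) (hη1 : η < 1) (hκ : 0 < κ)
    (x : ℝ → EuclideanSpace ℝ (Fin 2)) (θ : ℝ → ℝ)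
    (u nθ : ℝ → EuclideanSpace ℝ (Fin 2))
    (hu : ∀ s, u s = (WithLp.equiv 2 (Fin 2 → ℝ)).symm ![Real.cos (θ s), Real.sin (θ s)])
    (hnθ : ∀ s, nθ s = (WithLp.equiv 2 (Fin 2 → ℝ)).symm ![-Real.sin (θ s), Real.cos (θ s)])
    (a : ℝ → ℝ) (ha : ∀ s, a s = ⟪u s, ‖g - x s‖⁻¹ • (g - x s)⟫)
    (v ω : ℝ → ℝ)
    (hv : ∀ s, v s = κ * ‖g - x s‖ * (a s - η) / (1 - η * a s))
    (hω : ∀ s, ω s = (κ / η) * ⟪nθ s, ‖g - x s‖⁻¹ • (g - x s)⟫)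
    (hx : ∀ s, HasDerivAt x (v s • u s) s)
    (hθ : ∀ s, HasDerivAt θ (ω s) s)
    (hxg : ∀ s, x s ≠ g) (t0 : ℝ) :
    HasDerivAt a
        ((κ / η) * ⟪nθ t0, ‖g - x t0‖⁻¹ • (g - x t0)⟫ ^ 2 *
          ((1 - 2 * η * a t0 + η ^ 2) / (1 - η * a t0))) t0 ∧
      (κ / η) * ⟪nθ t0, ‖g - x t0‖⁻¹ • (g - x t0)⟫ ^ 2 * (1 - η * a t0)
        ≤ (κ / η) * ⟪nθ t0, ‖g - x t0‖⁻¹ • (g - x t0)⟫ ^ 2 *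
          ((1 - 2 * η * a t0 + η ^ 2) / (1 - η * a t0)) ∧
      0 ≤ (κ / η) * ⟪nθ t0, ‖g - x t0‖⁻¹ • (g - x t0)⟫ ^ 2 * (1 - η * a t0) := by
  have hg0 : ∀ s, g - x s ≠ 0 := fun s => sub_ne_zero_of_ne (Ne.symm (hxg s))
  have hρpos : (0:ℝ) < ‖g - x t0‖ := norm_pos_iff.mpr (hg0 t0)
  have hxne : ‖g - x t0‖ ≠ 0 := hρpos.ne'
  set B : ℝ := ⟪nθ t0, ‖g - x t0‖⁻¹ • (g - x t0)⟫ with hB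
  clear_value B
  -- inner product facts
  have huu : ⟪u t0, u t0⟫ = 1 := by
    simp only [hu, PiLp.inner_apply, Fin.sum_univ_two, WithLp.equiv_symm_apply, PiLp.toLp_apply,
      RCLike.inner_apply, conj_trivial, Matrix.cons_val_zero, Matrix.cons_val_one,
      Matrix.head_cons]
    nlinarith [Real.sin_sq_add_cos_sq (θ t0)]
  have hur : ⟪u t0, g - x t0⟫ = ‖g - x t0‖ * a t0 := by
    have h := ha t0
    rw [real_inner_smul_right] at h
    rw [h]; field_simp
  have hee : ((g - x t0) 0)^2 + ((g - x t0) 1)^2 = ‖g - x t0‖^2 := by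
    have h1 : ⟪g - x t0, g - x t0⟫ = ‖g - x t0‖^2 := real_inner_self_eq_norm_sq _
    rw [PiLp.inner_apply, Fin.sum_univ_two] at h1
    simpa [pow_two] using h1
  have hab : a t0 ^ 2 + B ^ 2 = 1 := by
    rw [ha t0, hB]
    simp only [hu, hnθ, PiLp.inner_apply, Fin.sum_univ_two, WithLp.equiv_symm_apply, PiLp.toLp_apply,
      PiLp.smul_apply, smul_eq_mul, RCLike.inner_apply, conj_trivial,
      Matrix.cons_val_zero, Matrix.cons_val_one, Matrix.head_cons]
    have h2 : (‖g - x t0‖⁻¹)^2 * (((g - x t0) 0)^2 + ((g - x t0) 1)^2) = 1 := by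
      rw [hee]; field_simp
    nlinarith [Real.sin_sq_add_cos_sq (θ t0), h2]
  have ha1 : a t0 ≤ 1 := by nlinarith [sq_nonneg B, sq_nonneg (a t0 - 1)]
  have hden : 0 < 1 - η * a t0 := by nlinarith
  -- derivative of u
  have hu' : HasDerivAt u (ω t0 • nθ t0) t0 := by
    have hpi : HasDerivAt (fun s => ![Real.cos (θ s), Real.sin (θ s)])
        ![-Real.sin (θ t0) * ω t0, Real.cos (θ t0) * ω t0] t0 := by
      rw [hasDerivAt_pi]
      intro i
      fin_cases i
      · simpa using (hθ t0).cos
      · simpa using (hθ t0).sin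
    have hcomp := ((EuclideanSpace.equiv (Fin 2) ℝ).symm.toContinuousLinearMap.hasFDerivAt).comp_hasDerivAt t0 hpi
    have hfun : (fun s => (EuclideanSpace.equiv (Fin 2) ℝ).symm.toContinuousLinearMap
        ![Real.cos (θ s), Real.sin (θ s)]) = u := by
      funext s; rw [hu s]; rfl
    simp only [Function.comp_def] at hcomp
    rw [hfun] at hcomp
    refine hcomp.congr_deriv ?_
    symm
    rw [hnθ t0, WithLp.equiv_symm_apply, ← WithLp.toLp_smul]
    have hid : ((EuclideanSpace.equiv (Fin 2) ℝ).symm.toContinuousLinearMap :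
        (Fin 2 → ℝ) → EuclideanSpace ℝ (Fin 2))
          ![-Real.sin (θ t0) * ω t0, Real.cos (θ t0) * ω t0]
        = WithLp.toLp 2
            ![-Real.sin (θ t0) * ω t0, Real.cos (θ t0) * ω t0] := rfl
    rw [hid]
    congr 1
    funext i; fin_cases i <;> simp [mul_comm]
  -- derivative of the distance
  have hr : HasDerivAt (fun s => g - x s) (-(v t0 • u t0)) t0 := by
    have h := (hasDerivAt_const t0 g).sub (hx t0); rw [zero_sub] at h; exact h
  have hρ : HasDerivAt (fun s => ‖g - x s‖) (-(v t0 * a t0)) t0 := by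
    have h1 := hr.norm_sq.sqrt (by positivity)
    have h2 : (fun s => Real.sqrt (‖g - x s‖^2)) = fun s => ‖g - x s‖ := by
      funext s; rw [Real.sqrt_sq (norm_nonneg _)]
    rw [h2] at h1
    convert h1 using 1
    rw [Real.sqrt_sq (norm_nonneg _), inner_neg_right, real_inner_smul_right,
      real_inner_comm, hur]
    field_simp
  -- derivative of e and of a
  have hinv : HasDerivAt (fun s => ‖g - x s‖⁻¹) (-(-(v t0 * a t0)) / ‖g - x t0‖^2) t0 :=
    hρ.inv hxne
  have he' : HasDerivAt (fun s => ‖g - x s‖⁻¹ • (g - x s))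
      (‖g - x t0‖⁻¹ • (-(v t0 • u t0)) + (-(-(v t0 * a t0)) / ‖g - x t0‖^2) • (g - x t0)) t0 :=
    hinv.smul hr
  have hA : HasDerivAt (fun s => ⟪u s, ‖g - x s‖⁻¹ • (g - x s)⟫)
      (⟪u t0, ‖g - x t0‖⁻¹ • (-(v t0 • u t0)) + (-(-(v t0 * a t0)) / ‖g - x t0‖^2) • (g - x t0)⟫
        + ⟪ω t0 • nθ t0, ‖g - x t0‖⁻¹ • (g - x t0)⟫) t0 := hu'.inner ℝ he'
  have hfunA : (fun s => ⟪u s, ‖g - x s‖⁻¹ • (g - x s)⟫) = a := by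
    funext s; exact (ha s).symm
  rw [hfunA] at hA
  have hEq : ⟪u t0, ‖g - x t0‖⁻¹ • (-(v t0 • u t0)) + (-(-(v t0 * a t0)) / ‖g - x t0‖^2) • (g - x t0)⟫
        + ⟪ω t0 • nθ t0, ‖g - x t0‖⁻¹ • (g - x t0)⟫
      = (κ / η) * B ^ 2 * ((1 - 2 * η * a t0 + η ^ 2) / (1 - η * a t0)) := by
    rw [inner_add_right, real_inner_smul_right, real_inner_smul_right, inner_neg_right,
      real_inner_smul_right, real_inner_smul_left, huu, hur, ← hB, hω t0, ← hB, hv t0]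
    set A := a t0 with hA'
    set R := ‖g - x t0‖ with hR
    clear_value A R
    have hRne : R ≠ 0 := hxne
    have hdne : 1 - η * A ≠ 0 := hden.ne'
    have hdne' : 1 - A * η ≠ 0 := by rwa [mul_comm A η]
    field_simp
    linear_combination (η * (A - η)) * hab
  rw [hEq] at hA
  refine ⟨hA, ?_, ?_⟩
  · have key : (1 - η * a t0) ≤ (1 - 2 * η * a t0 + η ^ 2) / (1 - η * a t0) := by
      rw [le_div_iff₀ hden]
      have ha2 : a t0 ^ 2 ≤ 1 := by linarith [sq_nonneg B]
      have h2 : η ^ 2 * a t0 ^ 2 ≤ η ^ 2 * 1 :=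
        mul_le_mul_of_nonneg_left ha2 (sq_nonneg η)
      have h3 : (1 - η * a t0) * (1 - η * a t0)
          = 1 - 2 * (η * a t0) + η ^ 2 * a t0 ^ 2 := by ring
      linarith [h2, h3]
    have hc : (0:ℝ) ≤ (κ / η) * B ^ 2 := by positivity
    exact mul_le_mul_of_nonneg_left key hc
  · exact mul_nonneg (by positivity) hden.le
end

section
/- Continuity matching of the circular motion prediction radius at the switching surface: if the alignment satisfies ⟨u, (g−x)/‖g−x‖⟩ = η, then the headway point equals the projected position (p = x̄), ‖x̄ − g‖ = √(1−η²)·‖x − g‖, and hence the extended position satisfies ‖x̂ − g‖ = ‖x − g‖. -/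
open scoped RealInnerProductSpace

/-- Continuity matching at the switching surface: if the alignment equals `η`, then
the headway point equals the projected position, `‖x̄ - g‖ = √(1-η²) ‖x - g‖`, and
hence the extended position satisfies `‖x̂ - g‖ = ‖x - g‖`. -/
theorem switching_surface_matching
    (x g : EuclideanSpace ℝ (Fin 2)) (θ η : ℝ) (hη0 : 0 < η) (hη1 : η < 1) (hxg : x ≠ g)
    (u p t xb xh : EuclideanSpace ℝ (Fin 2))
    (hu : u = (WithLp.equiv 2 (Fin 2 → ℝ)).symm ![Real.cos θ, Real.sin θ])
    (ha : ⟪u, ‖g - x‖⁻¹ • (g - x)⟫ = η)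
    (hp : p = x + (η * ‖x - g‖) • u)
    (ht : t = ‖g - p‖⁻¹ • (g - p))
    (hxb : xb = g + ⟪t, x - g⟫ • t)
    (hxh : ‖xh - g‖ = ‖xb - g‖ / Real.sqrt (1 - η ^ 2)) :
    p = xb ∧ ‖xb - g‖ = Real.sqrt (1 - η ^ 2) * ‖x - g‖ ∧ ‖xh - g‖ = ‖x - g‖ := by
  have hd : (0:ℝ) < ‖x - g‖ := norm_pos_iff.mpr (sub_ne_zero.mpr hxg)
  set d := ‖x - g‖ with hdd
  have h1 : (0:ℝ) < 1 - η ^ 2 := by nlinarith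
  have hs : (0:ℝ) < Real.sqrt (1 - η ^ 2) := Real.sqrt_pos.mpr h1
  have hst : Real.sqrt (1 - η ^ 2) ^ 2 = 1 - η ^ 2 := Real.sq_sqrt h1.le
  have hnu : ‖u‖ = 1 := by
    rw [hu, EuclideanSpace.norm_eq]
    simp [Fin.sum_univ_two, sq_abs]
  have hgx : ‖g - x‖ = d := norm_sub_rev g x
  have hug : ⟪u, g - x⟫ = η * d := by
    rw [real_inner_smul_right, hgx, inv_mul_eq_div, div_eq_iff hd.ne'] at ha
    linarith [ha]
  have hux : ⟪u, x - g⟫ = -(η * d) := by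
    have h : ⟪u, g - x⟫ = -⟪u, x - g⟫ := by rw [← inner_neg_right, neg_sub]
    linarith [hug, h]
  have hgp : g - p = (g - x) - (η * d) • u := by rw [hp]; abel
  have hgp2 : ‖g - p‖ ^ 2 = (1 - η ^ 2) * d ^ 2 := by
    rw [hgp, norm_sub_sq_real]
    have h2 : ⟪g - x, (η * d) • u⟫ = η * d * (η * d) := by
      rw [real_inner_smul_right, real_inner_comm, hug]
    have h3 : ‖(η * d) • u‖ = |η * d| := by rw [norm_smul, hnu, mul_one, Real.norm_eq_abs]
    rw [h2, h3, sq_abs, hgx]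
    ring
  have hgpn : ‖g - p‖ = Real.sqrt (1 - η ^ 2) * d := by
    have : ‖g - p‖ = Real.sqrt ((1 - η ^ 2) * d ^ 2) := by
      rw [← hgp2, Real.sqrt_sq (norm_nonneg _)]
    rw [this, Real.sqrt_mul h1.le, Real.sqrt_sq hd.le]
  have hip : ⟪g - p, x - g⟫ = -((1 - η ^ 2) * d ^ 2) := by
    rw [hgp, inner_sub_left, real_inner_smul_left, hux]
    have h4 : ⟪g - x, x - g⟫ = -(d ^ 2) := by
      rw [show g - x = -(x - g) by abel, inner_neg_left, real_inner_self_eq_norm_sq]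
    rw [h4]; ring
  have hsd : Real.sqrt (1 - η ^ 2) * d ≠ 0 := by positivity
  have htx : ⟪t, x - g⟫ = -(Real.sqrt (1 - η ^ 2) * d) := by
    rw [ht, real_inner_smul_left, hip, hgpn]
    field_simp
    nlinarith [hst]
  have hpb : p = xb := by
    rw [hxb, htx, ht, smul_smul]
    have hc : -(Real.sqrt (1 - η ^ 2) * d) * ‖g - p‖⁻¹ = -1 := by
      rw [hgpn]; field_simp
    rw [hc]
    module
  have hbn : ‖xb - g‖ = Real.sqrt (1 - η ^ 2) * d := by
    rw [← hpb, ← norm_sub_rev, hgpn]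
  refine ⟨hpb, hbn, ?_⟩
  rw [hxh, hbn]
  field_simp
end

section
/- Positive invariance of a triangle under velocities pointing to an interior/vertex point: if T = conv(g, x₀, p₀) ⊂ ℝ² is a triangle, x : [0,∞) → ℝ² is differentiable with x(0) = x₀, and at every time t the velocity ẋ(t) is a nonnegative multiple of p(t) − x(t) with p(t) ∈ T, then x(t) ∈ T for all t ≥ 0. -/
/-- Positive invariance of a compact convex set (e.g. a triangle
`conv(g, x₀, p₀) ⊂ ℝ²`) under velocities pointing toward a point of the set:
if `ẋ(t) = λ(t)(p(t) - x(t))` with `λ(t) ≥ 0`, `p(t) ∈ T` and `x(0) ∈ T`,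
then `x(t) ∈ T` for all `t ≥ 0`. -/
theorem triangle_positive_invariance
    (T : Set (EuclideanSpace ℝ (Fin 2))) (hTcomp : IsCompact T) (hTconv : Convex ℝ T)
    (x p : ℝ → EuclideanSpace ℝ (Fin 2)) (lam : ℝ → ℝ)
    (hpT : ∀ t, p t ∈ T) (hpc : Continuous p) (hlamc : Continuous lam)
    (hlam : ∀ t, 0 ≤ lam t)
    (hx : ∀ t, HasDerivAt x (lam t • (p t - x t)) t)
    (hx0 : x 0 ∈ T) :
    ∀ t : ℝ, 0 ≤ t → x t ∈ T := by
  intro t ht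
  have hTne : T.Nonempty := ⟨x 0, hx0⟩
  have hTclosed : IsClosed T := hTcomp.isClosed
  set f : ℝ → ℝ := fun s => Metric.infDist (x s) T with hfdef
  have hxc : Continuous x := continuous_iff_continuousAt.2 fun s => (hx s).continuousAt
  have hfc : Continuous f := (Metric.continuous_infDist_pt T).comp hxc
  have key : ∀ s ∈ Set.Icc (0:ℝ) t, f s ≤ gronwallBound 0 0 0 (s - 0) := by
    apply le_gronwallBound_of_liminf_deriv_right_le (f' := fun _ => 0) hfc.continuousOn
    · intro u _ r hr
      apply Filter.Eventually.frequently
      -- little-o estimate from the derivative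
      have hlo := (hasDerivAt_iff_isLittleO.1 (hx u)).def (half_pos hr)
      have h1 : ∀ᶠ z in nhdsWithin u (Set.Ioi u),
          ‖x z - x u - (z - u) • (lam u • (p u - x u))‖ ≤ r / 2 * ‖z - u‖ :=
        hlo.filter_mono nhdsWithin_le_nhds
      have hlt : u < u + (lam u + 1)⁻¹ := by
        have hl := hlam u
        have : (0:ℝ) < (lam u + 1)⁻¹ := by positivity
        linarith
      have h2 : ∀ᶠ z in nhdsWithin u (Set.Ioi u), z < u + (lam u + 1)⁻¹ :=
        Filter.Eventually.filter_mono nhdsWithin_le_nhds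
          (Filter.eventually_of_mem (isOpen_Iio.mem_nhds hlt) fun z hz => hz)
      filter_upwards [h1, h2, self_mem_nhdsWithin] with z hz1 hz2 hz3
      set s : ℝ := z - u with hsdef
      have hs : 0 < s := sub_pos.2 hz3
      set c : ℝ := s * lam u with hcdef
      have hc0 : 0 ≤ c := mul_nonneg hs.le (hlam u)
      have hc1 : c ≤ 1 := by
        have h' : s < (lam u + 1)⁻¹ := by simpa [hsdef] using sub_lt_iff_lt_add'.2 hz2
        have hl := hlam u
        have : s * (lam u + 1) < 1 := by
          rw [← lt_div_iff₀ (by positivity)]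
          simpa [div_eq_inv_mul, one_div] using h'
        nlinarith [hlam u, hs.le]
      obtain ⟨q, hqT, hq⟩ := hTcomp.exists_infDist_eq_dist hTne (x u)
      have hwT : (1 - c) • q + c • p u ∈ T :=
        hTconv hqT (hpT u) (by linarith) hc0 (by ring)
      have heq : x u + s • (lam u • (p u - x u)) - ((1 - c) • q + c • p u)
          = (1 - c) • (x u - q) := by
        rw [hcdef, smul_smul]
        module
      have hd1 : dist (x u + s • (lam u • (p u - x u))) ((1 - c) • q + c • p u) ≤ f u := by
        rw [dist_eq_norm, heq, norm_smul]
        have : ‖x u - q‖ = f u := by rw [hfdef]; simp [hq, dist_eq_norm]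
        rw [this]
        have hfu : 0 ≤ f u := Metric.infDist_nonneg
        have : |1 - c| ≤ 1 := by rw [abs_le]; constructor <;> linarith
        rw [Real.norm_eq_abs]
        nlinarith
      have hfz : f z ≤ f u + r / 2 * s := by
        calc f z ≤ dist (x z) ((1 - c) • q + c • p u) := Metric.infDist_le_dist_of_mem hwT
          _ ≤ dist (x z) (x u + s • (lam u • (p u - x u)))
              + dist (x u + s • (lam u • (p u - x u))) ((1 - c) • q + c • p u) :=
            dist_triangle _ _ _
          _ ≤ r / 2 * s + f u := by
            refine add_le_add ?_ hd1
            rw [dist_eq_norm]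
            have heq2 : x z - (x u + s • (lam u • (p u - x u)))
                = x z - x u - s • (lam u • (p u - x u)) := by abel
            rw [heq2]
            calc ‖x z - x u - s • (lam u • (p u - x u))‖ ≤ r / 2 * ‖s‖ := hz1
              _ = r / 2 * s := by rw [Real.norm_eq_abs, abs_of_pos hs]
          _ = f u + r / 2 * s := by ring
      have : s⁻¹ * (f z - f u) ≤ r / 2 := by
        rw [inv_mul_le_iff₀ hs]
        nlinarith
      calc (z - u)⁻¹ * (f z - f u) = s⁻¹ * (f z - f u) := rfl
        _ ≤ r / 2 := this
        _ < r := by linarith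
    · simp [hfdef, Metric.infDist_zero_of_mem hx0]
    · intro u _; simp
  have hft : f t ≤ 0 := by
    have := key t ⟨ht, le_refl t⟩
    simpa [gronwallBound] using this
  have : f t = 0 := le_antisymm hft Metric.infDist_nonneg
  exact (hTclosed.mem_iff_infDist_zero hTne).2 this
end
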